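/- If (a,b,c) is a solution of the *-Markov equation a·a* + b·b* + c·c* - abc = (3s₁s₂ - s₁³)/s₃, then for any integers i, j the triple (s₃^i·a, s₃^{-i-j}·b, s₃^j·c) is also a solution. -/

import Mathlib

open MvPolynomial

noncomputable section

/-- The polynomial ring `ℤ[s₁,s₂,s₃]`. -/
abbrev A3 := MvPolynomial (Fin 3) ℤ

def S1 : A3 := X 0
def S2 : A3 := X 1
def S3 : A3 := X 2

/-- The Laurent ring `ℤ[s₁,s₂,s₃^{±1}]`, polynomial in `s₁,s₂`, Laurent in `s₃`. -/
abbrev LP := Localization.Away S3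

def ι : A3 →+* LP := algebraMap A3 LP

def s₁ : LP := ι S1
def s₂ : LP := ι S2
def s₃ : LP := ι S3
/-- `s₃⁻¹`. -/
def s₃' : LP := IsLocalization.Away.invSelf S3

lemma s₃_mul_s₃' : s₃ * s₃' = 1 := IsLocalization.Away.mul_invSelf S3

/-- The `*`-involution `f ↦ f*`, determined by `s₁ ↦ s₂/s₃`, `s₂ ↦ s₁/s₃`, `s₃ ↦ 1/s₃`. -/
def starMap : LP →+* LP :=
  IsLocalization.Away.lift
    (g := eval₂Hom (Int.castRingHom LP) ![s₂ * s₃', s₁ * s₃', s₃']) S3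
    (by
      have h : (eval₂Hom (Int.castRingHom LP) ![s₂ * s₃', s₁ * s₃', s₃']) S3 = s₃' := by
        simp [S3]
      rw [h]
      exact IsUnit.of_mul_eq_one s₃ (by rw [mul_comm]; exact s₃_mul_s₃'))

/-- `s₃` as a unit of `ℤ[s₁,s₂,s₃^{±1}]`. -/
def u₃ : LPˣ :=
  ⟨s₃, s₃', s₃_mul_s₃', by rw [mul_comm]; exact s₃_mul_s₃'⟩

lemma starMap_s₃ : starMap s₃ = s₃' := by
  rw [s₃, ι, starMap, IsLocalization.Away.lift_eq]
  simp [S3]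

section UnitScaling

variable {R : Type*} [CommRing R] {u : Rˣ}

lemma val_zpow_mul_val_zpow_neg_sub_mul_val_zpow (i j : ℤ) (a b c : R) :
    ((u ^ i : Rˣ) : R) * a * (((u ^ (-i - j) : Rˣ) : R) * b) * (((u ^ j : Rˣ) : R) * c)
      = a * b * c := by
  have hunit : ((u ^ i : Rˣ) : R) * ((u ^ (-i - j) : Rˣ) : R) * ((u ^ j : Rˣ) : R) = 1 := by
    rw [← Units.val_mul, ← Units.val_mul, ← zpow_add, ← zpow_add,
      show i + (-i - j) + j = 0 by ring, zpow_zero, Units.val_one]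
  linear_combination (a * b * c) * hunit

variable (σ : R →+* R)

lemma val_zpow_mul_map_val_zpow (hu : σ u = ↑u⁻¹) (k : ℤ) :
    ((u ^ k : Rˣ) : R) * σ ((u ^ k : Rˣ) : R) = 1 := by
  have hσu : Units.map (σ : R →* R) u = u⁻¹ := Units.ext hu
  rw [show σ ((u ^ k : Rˣ) : R) = Units.map (σ : R →* R) (u ^ k) from rfl, map_zpow, hσu,
    inv_zpow, Units.mul_inv]

lemma val_zpow_mul_mul_map (hu : σ u = ↑u⁻¹) (k : ℤ) (x : R) :
    ((u ^ k : Rˣ) : R) * x * σ (((u ^ k : Rˣ) : R) * x) = x * σ x := by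
  rw [map_mul, mul_mul_mul_comm, val_zpow_mul_map_val_zpow σ hu, one_mul]

end UnitScaling

/-- If `(a,b,c)` solves the `*`-Markov equation, then so does
`(s₃^i a, s₃^{-i-j} b, s₃^j c)` for any integers `i, j`. -/
theorem starMarkov_mu (a b c : LP)
    (h : a * starMap a + b * starMap b + c * starMap c - a * b * c
        = (3 * s₁ * s₂ - s₁ ^ 3) * s₃') (i j : ℤ) :
    ((u₃ ^ i : LPˣ) : LP) * a * starMap (((u₃ ^ i : LPˣ) : LP) * a)
        + ((u₃ ^ (-i - j) : LPˣ) : LP) * b * starMap (((u₃ ^ (-i - j) : LPˣ) : LP) * b)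
        + ((u₃ ^ j : LPˣ) : LP) * c * starMap (((u₃ ^ j : LPˣ) : LP) * c)
        - (((u₃ ^ i : LPˣ) : LP) * a) * (((u₃ ^ (-i - j) : LPˣ) : LP) * b)
            * (((u₃ ^ j : LPˣ) : LP) * c)
      = (3 * s₁ * s₂ - s₁ ^ 3) * s₃' := by
  have hu : starMap u₃ = ↑u₃⁻¹ := starMap_s₃
  rwa [val_zpow_mul_mul_map starMap hu, val_zpow_mul_mul_map starMap hu,
    val_zpow_mul_mul_map starMap hu, val_zpow_mul_val_zpow_neg_sub_mul_val_zpow]
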